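/- arXiv:1303.6224 — 4 statements merged into one kernel-verified Lean document; each statement's English description precedes it below -/
import Mathlib

section
/- Let A be a real M×N matrix in which every row has exactly one entry equal to +1, exactly one entry equal to −1, and all other entries equal to 0; let L = AᵀA, d_max = max_i L_{ii}; let σ > 0, ν > 0, γ = σ²/ν², and τ > 0 with τ ≤ 1/(d_max + γ). Let Q = (1 − τγ)I − τL, w = τAᵀb + τγx₀, x[0] = x₀, x[t+1] = Q x[t] + w, and x* = (L + γI)⁻¹(Aᵀb + γx₀). Then the convergence is exponential with rate 1 − τγ: for every t ≥ 0, ‖x[t] − x*‖₂ ≤ (1 − τγ)ᵗ ‖x₀ − x*‖₂. -/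
open Matrix Finset

/-! Every row of `A` has absolute sum 2 and column `k` has absolute sum `L k k ≤ d_max`, so the
Schur test gives `‖Aᵀu‖² ≤ 2 d_max ‖u‖²`; hence the spectrum of `L = AᵀA` lies in `[0, 2 d_max]`,
and the step-size condition `τ d_max ≤ 1 - τγ` makes `Q = (1 - τγ) I - τ L` a
`(1 - τγ)`-contraction in the Euclidean norm. Since `x*` is the fixed point of `x ↦ Q x + w`,
the error `x[t] - x*` shrinks by that factor at every step. -/

theorem Matrix.mulVec_dotProduct_self_le_of_sum_abs_le {m n : Type*} [Fintype m] [Fintype n]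
    (A : Matrix m n ℝ) {r c : ℝ} (hr : 0 ≤ r)
    (hrow : ∀ i, ∑ j, |A i j| ≤ r) (hcol : ∀ j, ∑ i, |A i j| ≤ c) (v : n → ℝ) :
    (A *ᵥ v) ⬝ᵥ (A *ᵥ v) ≤ r * c * (v ⬝ᵥ v) := by
  have hentry : ∀ i, (A *ᵥ v) i ^ 2 ≤ r * ∑ j, |A i j| * v j ^ 2 := fun i =>
    calc (∑ j, A i j * v j) ^ 2 ≤ (∑ j, |A i j|) * ∑ j, |A i j| * v j ^ 2 :=
          sum_sq_le_sum_mul_sum_of_sq_le_mul _ (fun j _ => abs_nonneg _)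
            (fun j _ => by positivity) fun j _ => by rw [mul_pow, ← sq_abs (A i j), sq, mul_assoc]
      _ ≤ r * ∑ j, |A i j| * v j ^ 2 := by gcongr; exact hrow i
  calc (A *ᵥ v) ⬝ᵥ (A *ᵥ v) = ∑ i, (A *ᵥ v) i ^ 2 := by simp only [dotProduct, sq]
    _ ≤ ∑ i, r * ∑ j, |A i j| * v j ^ 2 := sum_le_sum fun i _ => hentry i
    _ = r * ∑ j, (∑ i, |A i j|) * v j ^ 2 := by
        rw [← mul_sum, sum_comm]; simp only [sum_mul]
    _ ≤ r * ∑ j, c * v j ^ 2 := by gcongr with j; exact hcol j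
    _ = r * c * (v ⬝ᵥ v) := by simp only [dotProduct, mul_sum, sq, mul_assoc]

def Matrix.IsOrientedIncidence {m n : Type*} (A : Matrix m n ℝ) : Prop :=
  ∀ e, ∃ i j, i ≠ j ∧ A e i = 1 ∧ A e j = -1 ∧ ∀ k, k ≠ i → k ≠ j → A e k = 0

namespace Matrix.IsOrientedIncidence

variable {m n : Type*} {A : Matrix m n ℝ}

theorem abs_apply (hA : A.IsOrientedIncidence) (e : m) (k : n) : |A e k| = A e k ^ 2 := by
  obtain ⟨i, j, -, hi, hj, h0⟩ := hA e
  by_cases hki : k = i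
  · simp [hki, hi]
  by_cases hkj : k = j
  · simp [hkj, hj]
  · simp [h0 k hki hkj]

theorem sum_abs_row [Fintype n] (hA : A.IsOrientedIncidence) (e : m) : ∑ k, |A e k| = 2 := by
  obtain ⟨i, j, hij, hi, hj, h0⟩ := hA e
  rw [Fintype.sum_eq_add i j hij fun k hk => by rw [h0 k hk.1 hk.2, abs_zero], hi, hj]
  norm_num

theorem sum_abs_col [Fintype m] (hA : A.IsOrientedIncidence) (k : n) :
    ∑ e, |A e k| = (Aᵀ * A) k k := by
  simp only [mul_apply, transpose_apply, hA.abs_apply, sq]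

theorem transpose_mulVec_dotProduct_self_le [Fintype m] [Fintype n] (hA : A.IsOrientedIncidence)
    {d : ℝ} (hd : 0 ≤ d) (hdeg : ∀ k, (Aᵀ * A) k k ≤ d) (u : m → ℝ) :
    (Aᵀ *ᵥ u) ⬝ᵥ (Aᵀ *ᵥ u) ≤ d * 2 * (u ⬝ᵥ u) :=
  Aᵀ.mulVec_dotProduct_self_le_of_sum_abs_le hd (fun k => (hA.sum_abs_col k).trans_le (hdeg k))
    (fun e => (hA.sum_abs_row e).le) u

end Matrix.IsOrientedIncidence

theorem Matrix.smul_one_sub_smul_transpose_mul_self_mulVec_dotProduct_self_le {m n : Type*}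
    [Fintype m] [Fintype n] [DecidableEq n] (A : Matrix m n ℝ) {α τ K : ℝ} (hτ : 0 ≤ τ)
    (hK : ∀ u, (Aᵀ *ᵥ u) ⬝ᵥ (Aᵀ *ᵥ u) ≤ K * (u ⬝ᵥ u)) (hτK : τ * K ≤ 2 * α) (v : n → ℝ) :
    ((α • 1 - τ • (Aᵀ * A)) *ᵥ v) ⬝ᵥ ((α • 1 - τ • (Aᵀ * A)) *ᵥ v) ≤ α ^ 2 * (v ⬝ᵥ v) := by
  have hQv : (α • 1 - τ • (Aᵀ * A)) *ᵥ v = α • v - τ • (Aᵀ *ᵥ (A *ᵥ v)) := by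
    rw [sub_mulVec, smul_mulVec, smul_mulVec, one_mulVec, mulVec_mulVec]
  set u := A *ᵥ v
  -- `v ⬝ AᵀA v = ‖u‖²`, so the cross term `-2ατ‖u‖²` absorbs `τ²‖Aᵀu‖² ≤ τ²K‖u‖²`.
  have hcross : v ⬝ᵥ (Aᵀ *ᵥ u) = u ⬝ᵥ u := by rw [dotProduct_mulVec, vecMul_transpose]
  have hu : 0 ≤ u ⬝ᵥ u := by
    simpa only [dotProduct, ← sq] using sum_nonneg fun i _ => sq_nonneg (u i)
  have hexpand : ((α • 1 - τ • (Aᵀ * A)) *ᵥ v) ⬝ᵥ ((α • 1 - τ • (Aᵀ * A)) *ᵥ v) =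
      α ^ 2 * (v ⬝ᵥ v) - 2 * α * τ * (u ⬝ᵥ u) + τ ^ 2 * ((Aᵀ *ᵥ u) ⬝ᵥ (Aᵀ *ᵥ u)) := by
    simp only [hQv, sub_dotProduct, dotProduct_sub, smul_dotProduct, dotProduct_smul, smul_eq_mul,
      dotProduct_comm (Aᵀ *ᵥ u) v, hcross]
    ring
  rw [hexpand]
  nlinarith [mul_le_mul_of_nonneg_left (hK u) (sq_nonneg τ),
    mul_le_mul_of_nonneg_right hτK (mul_nonneg hτ hu)]

theorem Matrix.posDef_transpose_mul_self_add_smul_one {m n : Type*} [Fintype m] [Fintype n]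
    [DecidableEq n] (A : Matrix m n ℝ) {γ : ℝ} (hγ : 0 < γ) : (Aᵀ * A + γ • 1).PosDef := by
  have hAA : (Aᵀ * A).PosSemidef :=
    conjTranspose_eq_transpose_of_trivial A ▸ posSemidef_conjTranspose_mul_self A
  exact PosDef.posSemidef_add hAA (PosDef.one.smul hγ)

theorem Matrix.smul_one_sub_smul_mulVec_add_smul_eq_self {n : Type*} [Fintype n] [DecidableEq n]
    (L : Matrix n n ℝ) (γ τ : ℝ) {c xs : n → ℝ} (h : (L + γ • 1) *ᵥ xs = c) :
    ((1 - τ * γ) • 1 - τ • L) *ᵥ xs + τ • c = xs := by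
  rw [← h]
  simp only [add_mulVec, sub_mulVec, smul_mulVec, one_mulVec]
  module

theorem Matrix.sqrt_dotProduct_self_sub_le_of_iterate {n : Type*} [Fintype n] {Q : Matrix n n ℝ}
    {w xs : n → ℝ} {ρ : ℝ} (hρ : 0 ≤ ρ) (hQ : ∀ v, (Q *ᵥ v) ⬝ᵥ (Q *ᵥ v) ≤ ρ ^ 2 * (v ⬝ᵥ v))
    (hfix : Q *ᵥ xs + w = xs) {x : ℕ → n → ℝ} (hx : ∀ t, x (t + 1) = Q *ᵥ x t + w) (t : ℕ) :
    √((x t - xs) ⬝ᵥ (x t - xs)) ≤ ρ ^ t * √((x 0 - xs) ⬝ᵥ (x 0 - xs)) := by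
  have hsq : (x t - xs) ⬝ᵥ (x t - xs) ≤ (ρ ^ 2) ^ t * ((x 0 - xs) ⬝ᵥ (x 0 - xs)) := by
    induction t with
    | zero => simp
    | succ t ih =>
      have herr : x (t + 1) - xs = Q *ᵥ (x t - xs) := by
        rw [hx, mulVec_sub]
        conv_lhs => rw [← hfix]
        abel
      rw [herr, pow_succ', mul_assoc]
      exact (hQ _).trans (mul_le_mul_of_nonneg_left ih (sq_nonneg ρ))
  calc √((x t - xs) ⬝ᵥ (x t - xs)) ≤ √((ρ ^ 2) ^ t * ((x 0 - xs) ⬝ᵥ (x 0 - xs))) :=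
        Real.sqrt_le_sqrt hsq
    _ = ρ ^ t * √((x 0 - xs) ⬝ᵥ (x 0 - xs)) := by
        rw [← pow_mul, mul_comm 2, pow_mul, Real.sqrt_mul (by positivity),
          Real.sqrt_sq (by positivity)]

/-- Under the standing assumption `τ ≤ 1/(d_max + γ)` (with `γ = σ²/ν²`),
the iteration converges exponentially with rate `1 − τγ`:
`‖x[t] − x*‖₂ ≤ (1 − τγ)ᵗ ‖x₀ − x*‖₂` for all `t ≥ 0`. -/
theorem stmt_5 {M N : ℕ} (A : Matrix (Fin M) (Fin N) ℝ)
    (hA : ∀ e : Fin M, ∃ i j : Fin N, i ≠ j ∧ A e i = 1 ∧ A e j = -1 ∧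
        ∀ k, k ≠ i → k ≠ j → A e k = 0)
    (L : Matrix (Fin N) (Fin N) ℝ) (hL : L = Aᵀ * A)
    (dmax : ℝ) (hdmax : IsGreatest (Set.range fun i => L i i) dmax)
    (σ ν γ τ : ℝ) (hσ : 0 < σ) (hν : 0 < ν) (hγ : γ = σ ^ 2 / ν ^ 2)
    (hτ : 0 < τ) (hτle : τ ≤ 1 / (dmax + γ))
    (Q : Matrix (Fin N) (Fin N) ℝ)
    (hQ : Q = (1 - τ * γ) • (1 : Matrix (Fin N) (Fin N) ℝ) - τ • L)
    (b : Fin M → ℝ) (x₀ : Fin N → ℝ) (w : Fin N → ℝ)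
    (hw : w = τ • Aᵀ.mulVec b + (τ * γ) • x₀)
    (x : ℕ → Fin N → ℝ) (hx0 : x 0 = x₀)
    (hx : ∀ t : ℕ, x (t + 1) = Q.mulVec (x t) + w)
    (xstar : Fin N → ℝ)
    (hxstar : xstar =
      (L + γ • (1 : Matrix (Fin N) (Fin N) ℝ))⁻¹.mulVec (Aᵀ.mulVec b + γ • x₀)) :
    ∀ t : ℕ, Real.sqrt (∑ i, (x t i - xstar i) ^ 2) ≤
      (1 - τ * γ) ^ t * Real.sqrt (∑ i, (x₀ i - xstar i) ^ 2) := by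
  subst hL hQ hw hx0
  replace hA : A.IsOrientedIncidence := hA
  have hγ0 : 0 < γ := hγ ▸ by positivity
  have hdeg : ∀ k, (Aᵀ * A) k k ≤ dmax := fun k => hdmax.2 ⟨k, rfl⟩
  have hd : 0 ≤ dmax := by
    obtain ⟨k, hk⟩ := hdmax.1
    exact (sum_nonneg fun e _ => abs_nonneg (A e k)).trans_eq ((hA.sum_abs_col k).trans hk)
  have hτd : τ * dmax ≤ 1 - τ * γ := by
    rw [le_div_iff₀ (by linarith)] at hτle
    linarith
  have hcontr := A.smul_one_sub_smul_transpose_mul_self_mulVec_dotProduct_self_le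
    (α := 1 - τ * γ) hτ.le (hA.transpose_mulVec_dotProduct_self_le hd hdeg) (by linarith)
  have hunit := (posDef_transpose_mul_self_add_smul_one A hγ0).det_pos.ne'.isUnit
  have hsolve : (Aᵀ * A + γ • 1) *ᵥ xstar = Aᵀ *ᵥ b + γ • x 0 := by
    rw [hxstar, mulVec_mulVec, mul_nonsing_inv _ hunit, one_mulVec]
  have hfix := (Aᵀ * A).smul_one_sub_smul_mulVec_add_smul_eq_self γ τ hsolve
  rw [smul_add, smul_smul] at hfix
  intro t
  simpa only [dotProduct, Pi.sub_apply, sq] using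
    sqrt_dotProduct_self_sub_le_of_iterate (by nlinarith) hcontr hfix hx t
end

section
/- Let A be a real M×N matrix, L = AᵀA, let γ > 0, τ > 0, Q = (1 − τγ)I − τL, and let x̄ ∈ ℝ^N, n ∈ ℝ^M, x₀ ∈ ℝ^N. Set b = A x̄ + n, w = τAᵀb + τγx₀, and define x[0] = x₀, x[t+1] = Q x[t] + w. Then for every t ≥ 0 the estimation error satisfies the identity x[t] − x̄ = Qᵗ(x₀ − x̄) + τγ Σ_{n'=0}^{t−1} Q^{n'} (x₀ − x̄) + τ Σ_{n'=0}^{t−1} Q^{n'} Aᵀ n. -/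
open Matrix Finset

/-- With `b = A x̄ + n`, `w = τAᵀb + τγx₀`, `Q = (1 − τγ)I − τL`,
the estimation error of the iteration `x[0] = x₀`, `x[t+1] = Q x[t] + w` satisfies
`x[t] − x̄ = Qᵗ(x₀ − x̄) + τγ Σ_{n'<t} Q^{n'} (x₀ − x̄) + τ Σ_{n'<t} Q^{n'} Aᵀ n`. -/
theorem stmt_8 {M N : ℕ} (A : Matrix (Fin M) (Fin N) ℝ)
    (L : Matrix (Fin N) (Fin N) ℝ) (hL : L = Aᵀ * A)
    (γ τ : ℝ) (hγ : 0 < γ) (hτ : 0 < τ)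
    (Q : Matrix (Fin N) (Fin N) ℝ)
    (hQ : Q = (1 - τ * γ) • (1 : Matrix (Fin N) (Fin N) ℝ) - τ • L)
    (xbar : Fin N → ℝ) (noise : Fin M → ℝ) (x₀ : Fin N → ℝ)
    (b : Fin M → ℝ) (hb : b = A.mulVec xbar + noise)
    (w : Fin N → ℝ) (hw : w = τ • Aᵀ.mulVec b + (τ * γ) • x₀)
    (x : ℕ → Fin N → ℝ) (hx0 : x 0 = x₀)
    (hx : ∀ t : ℕ, x (t + 1) = Q.mulVec (x t) + w) :
    ∀ t : ℕ, x t - xbar =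
      (Q ^ t).mulVec (x₀ - xbar)
      + (τ * γ) • (∑ n' ∈ Finset.range t, Q ^ n').mulVec (x₀ - xbar)
      + τ • (∑ n' ∈ Finset.range t, Q ^ n').mulVec (Aᵀ.mulVec noise) := by
  have key : Q.mulVec xbar + w - xbar
      = (τ * γ) • (x₀ - xbar) + τ • Aᵀ.mulVec noise := by
    subst hQ hw hb hL
    funext i
    simp [Matrix.mulVec_add, Matrix.mulVec_smul, Matrix.sub_mulVec,
      Matrix.smul_mulVec, Matrix.one_mulVec, ← Matrix.mulVec_mulVec,
      Pi.add_apply, Pi.sub_apply, Pi.smul_apply, smul_eq_mul]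
    ring
  intro t
  induction t with
  | zero => simp [hx0]
  | succ t ih =>
    have step : x (t + 1) - xbar
        = Q.mulVec (x t - xbar) + ((τ * γ) • (x₀ - xbar) + τ • Aᵀ.mulVec noise) := by
      rw [hx t, Matrix.mulVec_sub, ← key]
      abel
    rw [step, ih]
    rw [Finset.sum_range_succ']
    simp only [Matrix.mulVec_add, Matrix.mulVec_smul, pow_zero, Matrix.add_mulVec,
      Matrix.one_mulVec, ← Matrix.mulVec_mulVec, ← Matrix.mul_sum, smul_add]
    have hcomm : ∀ v : Fin N → ℝ,
        (∑ i ∈ Finset.range t, Q ^ (i + 1)).mulVec v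
          = Q.mulVec ((∑ i ∈ Finset.range t, Q ^ i).mulVec v) := by
      intro v
      simp only [Matrix.mulVec_mulVec, Finset.mul_sum, pow_succ']
    rw [hcomm, hcomm]
    have hQpow : Q *ᵥ Q ^ t *ᵥ (x₀ - xbar) = Q ^ (t + 1) *ᵥ (x₀ - xbar) := by
      rw [Matrix.mulVec_mulVec, ← pow_succ']
    rw [hQpow]
    abel
end

section
/- Let A be a real M×N matrix, L = AᵀA, σ > 0, ν > 0, γ = σ²/ν², τ > 0, and Q = (1 − τγ)I − τL. Let (Ω, P) be a probability space and let n : Ω → ℝ^M and d : Ω → ℝ^N be square-integrable random vectors with E[n] = 0, E[d] = 0, E[n nᵀ] = σ² I_M, E[d dᵀ] = ν² I_N, and E[d nᵀ] = 0. Set x̄ = x₀ + d (random true configuration with deterministic prior mean x₀ ∈ ℝ^N), b = A x̄ + n, w = τAᵀb + τγx₀, and define the random sequence x[0] = x₀, x[t+1] = Q x[t] + w. Then for every t ≥ 0 the mean square error H_t = (1/N) E[ ‖x[t] − x̄‖₂² ] satisfies H_t = (1/N) tr( ν² Q^{2t} + τσ² (I − Q^{2t})(I − Q)⁻¹ ).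 -/
/-!
Unrolling the affine recursion, the error of the iterate is linear in the data:
`x[t] − x̄ = B n + F' d` with `S = ∑_{k<t} Qᵏ`, noise gain `B = τ S Aᵀ` and prior gain
`F' = −(τγ S + Qᵗ)`. Since `n` and `d` are white and uncorrelated, the mean square error is
`tr(σ² B Bᵀ + ν² F' F'ᵀ)`. Using `τ AᵀA = (I − Q) − τγ I`, `σ² = γν²` and
`S (I − Q) = I − Qᵗ`, this collapses to `ν² (Q^{2t} + τγ ∑_{k<2t} Qᵏ)`, and
`∑_{k<2t} Qᵏ = (I − Q^{2t})(I − Q)⁻¹`.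
-/

open Matrix Finset MeasureTheory

section SecondMoments

variable {Ω ι κ μ : Type*} [MeasurableSpace Ω] {P : Measure Ω}

/-- The matrix `E[z zᵀ]`. -/
noncomputable def secondMomentMatrix (P : Measure Ω) (z : Ω → κ → ℝ) : Matrix κ κ ℝ :=
  of fun k l => ∫ ω, z ω k * z ω l ∂P

lemma integral_sum_sq_mulVec [Fintype ι] [Fintype κ] {z : Ω → κ → ℝ}
    (hz : ∀ k, MemLp (fun ω => z ω k) 2 P) (K : Matrix ι κ ℝ) :
    ∫ ω, ∑ i, (K *ᵥ z ω) i ^ 2 ∂P = trace (K * secondMomentMatrix P z * Kᵀ) := by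
  have hprod : ∀ i k l, Integrable (fun ω => K i k * K i l * (z ω k * z ω l)) P :=
    fun i k l => ((hz k).integrable_mul (hz l)).const_mul _
  have hexpand : ∀ ω, ∑ i, (K *ᵥ z ω) i ^ 2
      = ∑ i, ∑ k, ∑ l, K i k * K i l * (z ω k * z ω l) := fun ω => by
    simp only [mulVec, dotProduct, sq, sum_mul_sum]
    exact sum_congr rfl fun i _ => sum_congr rfl fun k _ => sum_congr rfl fun l _ => by ring
  simp_rw [hexpand]
  rw [integral_finsetSum _ fun i _ => integrable_finsetSum _ fun k _ =>
    integrable_finsetSum _ fun l _ => hprod i k l]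
  simp only [trace, Matrix.diag, mul_apply, secondMomentMatrix, of_apply, transpose_apply, sum_mul]
  refine sum_congr rfl fun i _ => ?_
  conv_rhs => rw [sum_comm]
  rw [integral_finsetSum _ fun k _ => integrable_finsetSum _ fun l _ => hprod i k l]
  refine sum_congr rfl fun k _ => ?_
  rw [integral_finsetSum _ fun l _ => hprod i k l]
  refine sum_congr rfl fun l _ => ?_
  rw [integral_const_mul]
  ring

variable [DecidableEq κ] [DecidableEq μ]

lemma secondMomentMatrix_sumElim {n : Ω → μ → ℝ} {d : Ω → κ → ℝ} {s r : ℝ}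
    (hncov : ∀ e f, ∫ ω, n ω e * n ω f ∂P = if e = f then s else 0)
    (hdcov : ∀ i j, ∫ ω, d ω i * d ω j ∂P = if i = j then r else 0)
    (hdn : ∀ i e, ∫ ω, d ω i * n ω e ∂P = 0) :
    secondMomentMatrix P (fun ω => Sum.elim (n ω) (d ω)) = fromBlocks (s • 1) 0 0 (r • 1) := by
  ext (e | i) (f | j)
  · simp [secondMomentMatrix, hncov, one_apply]
  · simp_rw [secondMomentMatrix, of_apply, Sum.elim_inl, Sum.elim_inr, mul_comm (n _ e), hdn]
    rfl
  · simp [secondMomentMatrix, hdn]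
  · simp [secondMomentMatrix, hdcov, one_apply]

lemma integral_sum_sq_mulVec_add_mulVec [Fintype ι] [Fintype κ] [Fintype μ]
    {n : Ω → μ → ℝ} {d : Ω → κ → ℝ} {s r : ℝ}
    (hn2 : ∀ e, MemLp (fun ω => n ω e) 2 P) (hd2 : ∀ i, MemLp (fun ω => d ω i) 2 P)
    (hncov : ∀ e f, ∫ ω, n ω e * n ω f ∂P = if e = f then s else 0)
    (hdcov : ∀ i j, ∫ ω, d ω i * d ω j ∂P = if i = j then r else 0)
    (hdn : ∀ i e, ∫ ω, d ω i * n ω e ∂P = 0) (B : Matrix ι μ ℝ) (F : Matrix ι κ ℝ) :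
    ∫ ω, ∑ i, (B *ᵥ n ω + F *ᵥ d ω) i ^ 2 ∂P = trace (s • (B * Bᵀ) + r • (F * Fᵀ)) := by
  have hz : ∀ k, MemLp (fun ω => Sum.elim (n ω) (d ω) k) 2 P := by
    rintro (e | i)
    exacts [hn2 e, hd2 i]
  simp_rw [← fromCols_mulVec_sumElim]
  rw [integral_sum_sq_mulVec hz, secondMomentMatrix_sumElim hncov hdcov hdn,
    fromCols_mul_fromBlocks, transpose_fromCols, fromCols_mul_fromRows]
  simp

end SecondMoments

lemma geom_sum_two_mul {R : Type*} [Semiring R] (q : R) (t : ℕ) :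
    ∑ i ∈ range (2 * t), q ^ i = (1 + q ^ t) * ∑ i ∈ range t, q ^ i := by
  rw [two_mul, sum_range_add, add_mul, one_mul, mul_sum]
  simp only [pow_add]

lemma smul_geom_sum_mul_geom_sum_add_sq {k R : Type*} [CommRing k] [Ring R] [Algebra k R]
    (c : k) (q : R) (t : ℕ) :
    c • ((∑ i ∈ range t, q ^ i) * (1 - q - c • 1) * ∑ i ∈ range t, q ^ i)
      + (c • ∑ i ∈ range t, q ^ i + q ^ t) ^ 2
      = q ^ (2 * t) + c • ∑ i ∈ range (2 * t), q ^ i := by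
  rw [geom_sum_two_mul, two_mul, pow_add]
  set S := ∑ i ∈ range t, q ^ i
  have hcomm : Commute S (q ^ t) := Commute.sum_left _ _ _ fun i _ => Commute.pow_pow_self q i t
  have hsandwich : S * (1 - q - c • 1) * S = S - q ^ t * S - c • (S * S) := by
    rw [mul_sub, sub_mul, mul_assoc, mul_neg_geom_sum, mul_sub, mul_one, hcomm.eq, mul_smul_comm,
      mul_one, smul_mul_assoc]
  rw [hsandwich]
  simp only [sq, add_mul, mul_add, one_mul, smul_mul_assoc, mul_smul_comm, hcomm.eq]
  module

lemma geom_sum_eq_one_sub_pow_mul_inv {n K : Type*} [Fintype n] [DecidableEq n] [Field K]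
    {Q : Matrix n n K} (hQ : IsUnit (1 - Q).det) (t : ℕ) :
    ∑ k ∈ range t, Q ^ k = (1 - Q ^ t) * (1 - Q)⁻¹ := by
  rw [← geom_sum_mul_neg, mul_nonsing_inv_cancel_right _ _ hQ]

lemma iterate_eq_geom_sum_mulVec {n R : Type*} [Fintype n] [DecidableEq n] [CommRing R]
    (Q : Matrix n n R) (u : n → R) {e : ℕ → n → R} (he : ∀ t, e (t + 1) = Q *ᵥ e t + u) (t : ℕ) :
    e t = (∑ k ∈ range t, Q ^ k) *ᵥ u + Q ^ t *ᵥ e 0 := by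
  induction t with
  | zero => simp
  | succ t ih =>
    rw [he, ih, mulVec_add, mulVec_mulVec, mulVec_mulVec, geom_sum_succ, add_mulVec, one_mulVec,
      ← pow_succ']
    abel

section Iteration

variable {m n : Type*} [Fintype m] [Fintype n] [DecidableEq n]

lemma posDef_smul_transpose_mul_self_add_smul_one (A : Matrix m n ℝ) {a b : ℝ} (ha : 0 ≤ a)
    (hb : 0 < b) : (a • (Aᵀ * A) + b • 1).PosDef :=
  PosDef.posSemidef_add (.smul (posSemidef_conjTranspose_mul_self A) ha) (.smul .one hb)

lemma iterate_sub_eq_gain_mulVec (A : Matrix m n ℝ) {Q : Matrix n n ℝ} {τ γ : ℝ}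
    (hQ : Q = (1 - τ * γ) • 1 - τ • (Aᵀ * A)) (x₀ d : n → ℝ) (e : m → ℝ) {x : ℕ → n → ℝ}
    (hx0 : x 0 = x₀)
    (hx : ∀ s, x (s + 1) = Q *ᵥ x s + (τ • Aᵀ *ᵥ (A *ᵥ (x₀ + d) + e) + (τ * γ) • x₀)) (t : ℕ) :
    x t - (x₀ + d) = (τ • ((∑ k ∈ range t, Q ^ k) * Aᵀ)) *ᵥ e
      + -((τ * γ) • ∑ k ∈ range t, Q ^ k + Q ^ t) *ᵥ d := by
  have hQv : ∀ v, Q *ᵥ v = v - (τ * γ) • v - τ • (Aᵀ *ᵥ (A *ᵥ v)) := fun v => by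
    rw [hQ, sub_mulVec, Matrix.smul_mulVec, Matrix.smul_mulVec, one_mulVec, mulVec_mulVec]
    module
  have hstep : ∀ s, x (s + 1) - (x₀ + d) = Q *ᵥ (x s - (x₀ + d)) + (τ • Aᵀ *ᵥ e - (τ * γ) • d) :=
    fun s => by
      rw [hx, mulVec_sub, hQv (x₀ + d), mulVec_add, mulVec_add]
      module
  rw [iterate_eq_geom_sum_mulVec Q _ (e := fun s => x s - (x₀ + d)) hstep t, hx0]
  simp only [mulVec_sub, mulVec_add, mulVec_smul, Matrix.smul_mulVec, neg_mulVec, add_mulVec,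
    mulVec_mulVec]
  module

/-- `τ S Aᵀ` and `τγ S + Qᵗ` (`S = ∑_{k<t} Qᵏ`) are the gains of the noise and of the prior
deviation in the error of the `t`-th iterate. -/
lemma gain_mul_transpose_identity (A : Matrix m n ℝ) (Q : Matrix n n ℝ) {τ γ : ℝ}
    (hQ : τ • (Aᵀ * A) = 1 - Q - (τ * γ) • 1) (t : ℕ) :
    γ • (τ • ((∑ k ∈ range t, Q ^ k) * Aᵀ) * (τ • ((∑ k ∈ range t, Q ^ k) * Aᵀ))ᵀ)
      + ((τ * γ) • ∑ k ∈ range t, Q ^ k + Q ^ t) * ((τ * γ) • ∑ k ∈ range t, Q ^ k + Q ^ t)ᵀ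
      = Q ^ (2 * t) + (τ * γ) • ∑ k ∈ range (2 * t), Q ^ k := by
  have hQt : Qᵀ = Q := by
    have hQ' : Q = 1 - (τ * γ) • 1 - τ • (Aᵀ * A) := by rw [hQ]; abel
    rw [hQ', transpose_sub, transpose_sub, transpose_smul, transpose_smul, transpose_mul,
      transpose_transpose, transpose_one]
  rw [← smul_geom_sum_mul_geom_sum_add_sq (τ * γ) Q t, ← hQ]
  set S := ∑ k ∈ range t, Q ^ k
  have hSt : Sᵀ = S := by simp only [S, transpose_sum, transpose_pow, hQt]
  simp only [transpose_add, transpose_smul, transpose_mul, transpose_pow, transpose_transpose, hSt,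
    hQt, ← sq]
  simp only [Matrix.smul_mul, Matrix.mul_smul, Matrix.mul_assoc, smul_smul]
  module

end Iteration

theorem stmt_9_general {M N : ℕ} (A : Matrix (Fin M) (Fin N) ℝ)
    (L : Matrix (Fin N) (Fin N) ℝ) (hL : L = Aᵀ * A)
    (σ ν γ τ : ℝ) (hσ : 0 < σ) (hν : 0 < ν) (hγ : γ = σ ^ 2 / ν ^ 2) (hτ : 0 < τ)
    (Q : Matrix (Fin N) (Fin N) ℝ)
    (hQ : Q = (1 - τ * γ) • (1 : Matrix (Fin N) (Fin N) ℝ) - τ • L)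
    (Ω : Type*) [MeasurableSpace Ω] (P : Measure Ω)
    (noise : Ω → Fin M → ℝ) (d : Ω → Fin N → ℝ)
    (hn2 : ∀ e, MemLp (fun ω => noise ω e) 2 P)
    (hd2 : ∀ i, MemLp (fun ω => d ω i) 2 P)
    (hncov : ∀ e f, ∫ ω, noise ω e * noise ω f ∂P = if e = f then σ ^ 2 else 0)
    (hdcov : ∀ i j, ∫ ω, d ω i * d ω j ∂P = if i = j then ν ^ 2 else 0)
    (hdn : ∀ i e, ∫ ω, d ω i * noise ω e ∂P = 0)
    (x₀ : Fin N → ℝ)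
    (xbar : Ω → Fin N → ℝ) (hxbar : ∀ ω, xbar ω = x₀ + d ω)
    (b : Ω → Fin M → ℝ) (hb : ∀ ω, b ω = A.mulVec (xbar ω) + noise ω)
    (w : Ω → Fin N → ℝ) (hw : ∀ ω, w ω = τ • Aᵀ.mulVec (b ω) + (τ * γ) • x₀)
    (x : ℕ → Ω → Fin N → ℝ) (hx0 : ∀ ω, x 0 ω = x₀)
    (hx : ∀ t ω, x (t + 1) ω = Q.mulVec (x t ω) + w ω) :
    ∀ t : ℕ, (1 / (N : ℝ)) * ∫ ω, ∑ i, (x t ω i - xbar ω i) ^ 2 ∂P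
      = (1 / (N : ℝ)) * Matrix.trace
          (ν ^ 2 • Q ^ (2 * t) + (τ * σ ^ 2) • ((1 - Q ^ (2 * t)) * (1 - Q)⁻¹)) := by
  intro t
  subst hL
  have hτL : τ • (Aᵀ * A) = 1 - Q - (τ * γ) • 1 := by rw [hQ]; module
  have hσν : σ ^ 2 = γ * ν ^ 2 := by rw [hγ]; field_simp
  have hunit : IsUnit (1 - Q).det := by
    have h : 1 - Q = τ • (Aᵀ * A) + (τ * γ) • 1 := by rw [hτL]; abel
    rw [h, ← isUnit_iff_isUnit_det]
    exact (posDef_smul_transpose_mul_self_add_smul_one A hτ.le (by rw [hγ]; positivity)).isUnit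
  have herr := fun ω => hxbar ω ▸ iterate_sub_eq_gain_mulVec A hQ x₀ (d ω) (noise ω)
    (x := (x · ω)) (hx0 ω) (fun s => by rw [hx, hw, hb, hxbar]) t
  set S := ∑ k ∈ range t, Q ^ k
  congr 1
  calc ∫ ω, ∑ i, (x t ω i - xbar ω i) ^ 2 ∂P
      = ∫ ω, ∑ i, ((τ • (S * Aᵀ)) *ᵥ noise ω + -((τ * γ) • S + Q ^ t) *ᵥ d ω) i ^ 2 ∂P := by
        simp_rw [← herr, Pi.sub_apply]
    _ = trace (ν ^ 2 • (γ • (τ • (S * Aᵀ) * (τ • (S * Aᵀ))ᵀ)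
          + ((τ * γ) • S + Q ^ t) * ((τ * γ) • S + Q ^ t)ᵀ)) := by
        rw [integral_sum_sq_mulVec_add_mulVec hn2 hd2 hncov hdcov hdn, transpose_neg,
          neg_mul_neg, hσν]
        congr 1
        module
    _ = trace (ν ^ 2 • Q ^ (2 * t) + (τ * σ ^ 2) • ((1 - Q ^ (2 * t)) * (1 - Q)⁻¹)) := by
        rw [gain_mul_transpose_identity A Q hτL, ← geom_sum_eq_one_sub_pow_mul_inv hunit, hσν]
        congr 1
        module

/-- With random true configuration `x̄ = x₀ + d` and measurements
`b = A x̄ + n`, where `E[n] = 0`, `E[d] = 0`, `E[n nᵀ] = σ² I`, `E[d dᵀ] = ν² I`,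
`E[d nᵀ] = 0`, the mean square error of the iteration `x[0] = x₀`,
`x[t+1] = Q x[t] + w` (with `w = τAᵀb + τγx₀`, `Q = (1 − τγ)I − τL`, `γ = σ²/ν²`)
satisfies `H_t = (1/N) tr( ν² Q^{2t} + τσ² (I − Q^{2t})(I − Q)⁻¹ )`. -/
theorem stmt_9 {M N : ℕ} (A : Matrix (Fin M) (Fin N) ℝ)
    (L : Matrix (Fin N) (Fin N) ℝ) (hL : L = Aᵀ * A)
    (σ ν γ τ : ℝ) (hσ : 0 < σ) (hν : 0 < ν) (hγ : γ = σ ^ 2 / ν ^ 2) (hτ : 0 < τ)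
    (Q : Matrix (Fin N) (Fin N) ℝ)
    (hQ : Q = (1 - τ * γ) • (1 : Matrix (Fin N) (Fin N) ℝ) - τ • L)
    (Ω : Type*) [MeasurableSpace Ω] (P : Measure Ω) [IsProbabilityMeasure P]
    (noise : Ω → Fin M → ℝ) (d : Ω → Fin N → ℝ)
    (hn2 : ∀ e, MemLp (fun ω => noise ω e) 2 P)
    (hd2 : ∀ i, MemLp (fun ω => d ω i) 2 P)
    (hnmean : ∀ e, ∫ ω, noise ω e ∂P = 0)
    (hdmean : ∀ i, ∫ ω, d ω i ∂P = 0)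
    (hncov : ∀ e f, ∫ ω, noise ω e * noise ω f ∂P = if e = f then σ ^ 2 else 0)
    (hdcov : ∀ i j, ∫ ω, d ω i * d ω j ∂P = if i = j then ν ^ 2 else 0)
    (hdn : ∀ i e, ∫ ω, d ω i * noise ω e ∂P = 0)
    (x₀ : Fin N → ℝ)
    (xbar : Ω → Fin N → ℝ) (hxbar : ∀ ω, xbar ω = x₀ + d ω)
    (b : Ω → Fin M → ℝ) (hb : ∀ ω, b ω = A.mulVec (xbar ω) + noise ω)
    (w : Ω → Fin N → ℝ) (hw : ∀ ω, w ω = τ • Aᵀ.mulVec (b ω) + (τ * γ) • x₀)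
    (x : ℕ → Ω → Fin N → ℝ) (hx0 : ∀ ω, x 0 ω = x₀)
    (hx : ∀ t ω, x (t + 1) ω = Q.mulVec (x t ω) + w ω) :
    ∀ t : ℕ, (1 / (N : ℝ)) * ∫ ω, ∑ i, (x t ω i - xbar ω i) ^ 2 ∂P
      = (1 / (N : ℝ)) * Matrix.trace
          (ν ^ 2 • Q ^ (2 * t) + (τ * σ ^ 2) • ((1 - Q ^ (2 * t)) * (1 - Q)⁻¹)) :=
  stmt_9_general A L hL σ ν γ τ hσ hν hγ hτ Q hQ Ω P noise d hn2 hd2 hncov hdcov hdn x₀ xbar hxbar b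
    hb w hw x hx0 hx
end

section
/- Let σ > 0, ν > 0, γ = σ²/ν², τ > 0 with τγ < 1, set α = 1/(τγ), and let ξ₀, …, ξ_{N−1} be real numbers with −1 + τγ ≤ ξ_i ≤ 1 − τγ for all i. Define H_t = (ν²/N) Σ_{i=0}^{N−1} ξ_i^{2t} + (τσ²/N) Σ_{i=0}^{N−1} (1 − ξ_i^{2t})/(1 − ξ_i) for t = 0, 1, 2, …. Then H_t is nonincreasing in t (H_{t+1} ≤ H_t for all t); and if at least one ξ_i is nonzero and satisfies ξ_i < 1 − τγ, then H_{t+1} < H_t for all t. -/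
open Finset

/-- With `γ = σ²/ν²`, `τγ < 1`, `α = 1/(τγ)`, and real numbers
`ξ_i ∈ [−1+τγ, 1−τγ]`, the mean square error
`H_t = (ν²/N) Σ_i ξ_i^{2t} + (τσ²/N) Σ_i (1 − ξ_i^{2t})/(1 − ξ_i)` is nonincreasing
in `t`; it is strictly decreasing if some `ξ_i` is nonzero with `ξ_i < 1 − τγ`. -/
theorem stmt_14 {N : ℕ} (σ ν γ τ α : ℝ) (hσ : 0 < σ) (hν : 0 < ν)
    (hγ : γ = σ ^ 2 / ν ^ 2) (hτ : 0 < τ) (hτγ : τ * γ < 1) (hα : α = 1 / (τ * γ))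
    (ξ : Fin N → ℝ) (hξ : ∀ i, -1 + τ * γ ≤ ξ i ∧ ξ i ≤ 1 - τ * γ)
    (H : ℕ → ℝ)
    (hH : ∀ t : ℕ, H t = ν ^ 2 / (N : ℝ) * ∑ i, ξ i ^ (2 * t)
        + τ * σ ^ 2 / (N : ℝ) * ∑ i, (1 - ξ i ^ (2 * t)) / (1 - ξ i)) :
    (∀ t : ℕ, H (t + 1) ≤ H t) ∧
      ((∃ i, ξ i ≠ 0 ∧ ξ i < 1 - τ * γ) → ∀ t : ℕ, H (t + 1) < H t) := by
  have hγpos : 0 < γ := by rw [hγ]; positivity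
  have hc : 0 < τ * γ := mul_pos hτ hγpos
  have hb : τ * σ ^ 2 = (τ * γ) * ν ^ 2 := by
    rw [hγ]; field_simp
  have key : ∀ t, H t - H (t + 1)
      = ∑ i, (1 / (N : ℝ)) * (ξ i ^ (2 * t) * (1 + ξ i)
          * (ν ^ 2 * (1 - ξ i) - τ * σ ^ 2)) := by
    intro t
    rw [hH, hH, Finset.mul_sum, Finset.mul_sum, Finset.mul_sum, Finset.mul_sum]
    rw [← Finset.sum_add_distrib, ← Finset.sum_add_distrib, ← Finset.sum_sub_distrib]
    refine Finset.sum_congr rfl fun i _ => ?_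
    have hNpos : (0 : ℝ) < N := by
      have : 0 < N := Nat.pos_of_ne_zero (by rintro rfl; exact i.elim0)
      exact_mod_cast this
    have h1 : (1 : ℝ) - ξ i ≠ 0 := by have := (hξ i).2; nlinarith
    field_simp
    ring
  have termnonneg : ∀ t, ∀ i : Fin N, 0 ≤ (1 / (N : ℝ)) * (ξ i ^ (2 * t) * (1 + ξ i)
      * (ν ^ 2 * (1 - ξ i) - τ * σ ^ 2)) := by
    intro t i
    have h1 := (hξ i).1
    have h2 := (hξ i).2
    have hp : 0 ≤ ξ i ^ (2 * t) := (even_two_mul t).pow_nonneg _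
    have hN : (0 : ℝ) ≤ 1 / (N : ℝ) := by positivity
    have h3 : 0 ≤ 1 + ξ i := by nlinarith
    have h4 : 0 ≤ ν ^ 2 * (1 - ξ i) - τ * σ ^ 2 := by rw [hb]; nlinarith
    positivity
  constructor
  · intro t
    have h := key t
    have : 0 ≤ H t - H (t + 1) := by
      rw [h]; exact Finset.sum_nonneg fun i _ => termnonneg t i
    linarith
  · rintro ⟨i, hne, hlt⟩ t
    have h := key t
    have hpos : 0 < H t - H (t + 1) := by
      rw [h]
      refine Finset.sum_pos' (fun j _ => termnonneg t j) ⟨i, Finset.mem_univ i, ?_⟩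
      have hNpos : (0 : ℝ) < N := by
        have : 0 < N := Nat.pos_of_ne_zero (by rintro rfl; exact i.elim0)
        exact_mod_cast this
      have h1 := (hξ i).1
      have hp : 0 < ξ i ^ (2 * t) := (even_two_mul t).pow_pos hne
      have h3 : 0 < 1 + ξ i := by nlinarith
      have h4 : 0 < ν ^ 2 * (1 - ξ i) - τ * σ ^ 2 := by
        rw [hb]
        nlinarith [mul_pos (pow_pos hν 2) (sub_pos.mpr hlt)]
      positivity
    linarith
end
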